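/- (Nonnegativity of conditional mutual information.) Let α, β, γ be finite nonempty types and let p : α × β × γ → ℝ be a joint probability mass function of random variables (S, Y, Z). Then the conditional mutual information I(S;Y|Z) = H(p_{SZ}) + H(p_{YZ}) − H(p_Z) − H(p) is nonnegative: I(S;Y|Z) ≥ 0. -/

import Mathlib

/-- Shannon entropy of a pmf on a finite type, with the convention `0 * log 0 = 0`
(which holds automatically since `Real.log 0 = 0`). -/
noncomputable def shannonEntropy {γ : Type*} [Fintype γ] (q : γ → ℝ) : ℝ :=
  -∑ x, q x * Real.log (q x)

private lemma gibbs_pointwise (a b : ℝ) (ha : 0 ≤ a) (hb : 0 ≤ b)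
    (h : a ≠ 0 → 0 < b) : a - b ≤ a * Real.log a - a * Real.log b := by
  rcases eq_or_ne a 0 with rfl | ha'
  · simp; linarith
  · have ha0 : 0 < a := lt_of_le_of_ne ha (Ne.symm ha')
    have hb0 : 0 < b := h ha'
    have hlog : Real.log (b / a) ≤ b / a - 1 := Real.log_le_sub_one_of_pos (by positivity)
    rw [Real.log_div (ne_of_gt hb0) ha'] at hlog
    have h1 := mul_le_mul_of_nonneg_left hlog (le_of_lt ha0)
    have h2 : a * (b / a - 1) = b - a := by field_simp
    nlinarith

private lemma reorder3 {α β γ : Type*} [Fintype α] [Fintype β] [Fintype γ]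
    (f : α × β × γ → ℝ) :
    ∑ x : α × β × γ, f x = ∑ s, ∑ y, ∑ z, f (s, y, z) := by
  rw [Fintype.sum_prod_type]
  exact Finset.sum_congr rfl fun s _ => Fintype.sum_prod_type _

private lemma reorderZ {α β γ : Type*} [Fintype α] [Fintype β] [Fintype γ]
    (f : α × β × γ → ℝ) :
    ∑ x : α × β × γ, f x = ∑ z, ∑ s, ∑ y, f (s, y, z) :=
  calc ∑ x : α × β × γ, f x = ∑ s, ∑ y, ∑ z, f (s, y, z) := reorder3 f
    _ = ∑ s, ∑ z, ∑ y, f (s, y, z) := Finset.sum_congr rfl fun s _ => Finset.sum_comm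
    _ = ∑ z, ∑ s, ∑ y, f (s, y, z) := Finset.sum_comm

private lemma reorderY {α β γ : Type*} [Fintype α] [Fintype β] [Fintype γ]
    (f : α × β × γ → ℝ) :
    ∑ x : α × β × γ, f x = ∑ y, ∑ z, ∑ s, f (s, y, z) :=
  calc ∑ x : α × β × γ, f x = ∑ s, ∑ y, ∑ z, f (s, y, z) := reorder3 f
    _ = ∑ y, ∑ s, ∑ z, f (s, y, z) := Finset.sum_comm
    _ = ∑ y, ∑ z, ∑ s, f (s, y, z) := Finset.sum_congr rfl fun y _ => Finset.sum_comm

private lemma reorderS {α β γ : Type*} [Fintype α] [Fintype β] [Fintype γ]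
    (f : α × β × γ → ℝ) :
    ∑ x : α × β × γ, f x = ∑ s, ∑ z, ∑ y, f (s, y, z) :=
  calc ∑ x : α × β × γ, f x = ∑ s, ∑ y, ∑ z, f (s, y, z) := reorder3 f
    _ = ∑ s, ∑ z, ∑ y, f (s, y, z) := Finset.sum_congr rfl fun s _ => Finset.sum_comm

/-- Nonnegativity of conditional mutual information: for a joint pmf `p` of
`(S,Y,Z)` on `α × β × γ`,
`I(S;Y|Z) = H(p_{SZ}) + H(p_{YZ}) − H(p_Z) − H(p) ≥ 0`. -/
theorem cond_mutual_information_nonneg {α β γ : Type*} [Fintype α] [Nonempty α]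
    [Fintype β] [Nonempty β] [Fintype γ] [Nonempty γ]
    (p : α × β × γ → ℝ) (hp : ∀ x, 0 ≤ p x) (hsum : ∑ x, p x = 1) :
    0 ≤ shannonEntropy (fun sz : α × γ => ∑ y, p (sz.1, y, sz.2))
        + shannonEntropy (fun yz : β × γ => ∑ s, p (s, yz.1, yz.2))
        - shannonEntropy (fun z => ∑ s, ∑ y, p (s, y, z))
        - shannonEntropy p := by
  classical
  set pSZ : α × γ → ℝ := fun sz => ∑ y, p (sz.1, y, sz.2) with hpSZdef
  set pYZ : β × γ → ℝ := fun yz => ∑ s, p (s, yz.1, yz.2) with hpYZdef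
  set pZ : γ → ℝ := fun z => ∑ s, ∑ y, p (s, y, z) with hpZdef
  set q : α × β × γ → ℝ :=
    fun x => pSZ (x.1, x.2.2) * pYZ (x.2.1, x.2.2) / pZ x.2.2 with hqdef
  -- nonnegativity of marginals
  have hpSZ_nn : ∀ sz, 0 ≤ pSZ sz := fun sz => Finset.sum_nonneg fun y _ => hp _
  have hpYZ_nn : ∀ yz, 0 ≤ pYZ yz := fun yz => Finset.sum_nonneg fun s _ => hp _
  have hpZ_nn : ∀ z, 0 ≤ pZ z :=
    fun z => Finset.sum_nonneg fun s _ => Finset.sum_nonneg fun y _ => hp _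
  have hq_nn : ∀ x, 0 ≤ q x := fun x =>
    div_nonneg (mul_nonneg (hpSZ_nn _) (hpYZ_nn _)) (hpZ_nn _)
  -- positivity of marginals where p is positive
  have hpSZ_pos : ∀ x : α × β × γ, p x ≠ 0 → 0 < pSZ (x.1, x.2.2) := by
    rintro ⟨s, y, z⟩ h
    exact lt_of_lt_of_le (lt_of_le_of_ne (hp _) (Ne.symm h))
      (Finset.single_le_sum (fun i _ => hp (s, i, z)) (Finset.mem_univ y))
  have hpYZ_pos : ∀ x : α × β × γ, p x ≠ 0 → 0 < pYZ (x.2.1, x.2.2) := by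
    rintro ⟨s, y, z⟩ h
    exact lt_of_lt_of_le (lt_of_le_of_ne (hp _) (Ne.symm h))
      (Finset.single_le_sum (fun i _ => hp (i, y, z)) (Finset.mem_univ s))
  have hpZ_pos : ∀ x : α × β × γ, p x ≠ 0 → 0 < pZ x.2.2 := by
    rintro ⟨s, y, z⟩ h
    refine lt_of_lt_of_le (lt_of_le_of_ne (hp _) (Ne.symm h)) ?_
    calc p (s, y, z) ≤ ∑ y', p (s, y', z) :=
          Finset.single_le_sum (fun i _ => hp (s, i, z)) (Finset.mem_univ y)
      _ ≤ ∑ s', ∑ y', p (s', y', z) :=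
          Finset.single_le_sum (fun i _ => Finset.sum_nonneg fun j _ => hp (i, j, z))
            (Finset.mem_univ s)
  have hq_pos : ∀ x, p x ≠ 0 → 0 < q x := fun x h =>
    div_pos (mul_pos (hpSZ_pos x h) (hpYZ_pos x h)) (hpZ_pos x h)
  -- marginal consistency
  have hSZ_marg : ∀ z, ∑ s, pSZ (s, z) = pZ z := fun z => rfl
  have hYZ_marg : ∀ z, ∑ y, pYZ (y, z) = pZ z := fun z => Finset.sum_comm
  -- q sums to 1
  have hqsum : ∑ x, q x = 1 := by
    rw [reorderZ q]
    have h3 : ∀ z, ∑ s, ∑ y, q (s, y, z) = pZ z := by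
      intro z
      have : ∀ s, ∑ y, q (s, y, z) = pSZ (s, z) * ((∑ y, pYZ (y, z)) / pZ z) := by
        intro s
        simp only [hqdef]
        rw [← Finset.sum_div, ← Finset.mul_sum, mul_div_assoc]
      rw [Finset.sum_congr rfl fun s _ => this s, hYZ_marg, ← Finset.sum_mul, hSZ_marg]
      rcases eq_or_ne (pZ z) 0 with h | h
      · simp [h]
      · rw [div_self h, mul_one]
    rw [Finset.sum_congr rfl fun z _ => h3 z, ← reorderZ p] at *
    exact hsum
  -- pointwise log decomposition
  have hlogq : ∀ x, p x * Real.log (q x) =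
      p x * Real.log (pSZ (x.1, x.2.2)) + p x * Real.log (pYZ (x.2.1, x.2.2))
        - p x * Real.log (pZ x.2.2) := by
    intro x
    rcases eq_or_ne (p x) 0 with h | h
    · simp [h]
    · have h1 := hpSZ_pos x h
      have h2 := hpYZ_pos x h
      have h3 := hpZ_pos x h
      have hq : q x = pSZ (x.1, x.2.2) * pYZ (x.2.1, x.2.2) / pZ x.2.2 := rfl
      rw [hq, Real.log_div (by positivity) (ne_of_gt h3),
        Real.log_mul (ne_of_gt h1) (ne_of_gt h2)]
      ring
  have hA : ∑ x : α × β × γ, p x * Real.log (pSZ (x.1, x.2.2))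
      = ∑ sz : α × γ, pSZ sz * Real.log (pSZ sz) := by
    rw [reorderS (fun x => p x * Real.log (pSZ (x.1, x.2.2))),
      Fintype.sum_prod_type (f := fun sz : α × γ => pSZ sz * Real.log (pSZ sz))]
    refine Finset.sum_congr rfl fun s _ => Finset.sum_congr rfl fun z _ => ?_
    show ∑ y, p (s, y, z) * Real.log (pSZ (s, z)) = _
    rw [← Finset.sum_mul]
  have hB : ∑ x : α × β × γ, p x * Real.log (pYZ (x.2.1, x.2.2))
      = ∑ yz : β × γ, pYZ yz * Real.log (pYZ yz) := by
    rw [reorderY (fun x => p x * Real.log (pYZ (x.2.1, x.2.2))),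
      Fintype.sum_prod_type (f := fun yz : β × γ => pYZ yz * Real.log (pYZ yz))]
    refine Finset.sum_congr rfl fun y _ => Finset.sum_congr rfl fun z _ => ?_
    show ∑ s, p (s, y, z) * Real.log (pYZ (y, z)) = _
    rw [← Finset.sum_mul]
  have hC : ∑ x : α × β × γ, p x * Real.log (pZ x.2.2)
      = ∑ z, pZ z * Real.log (pZ z) := by
    rw [reorderZ (fun x => p x * Real.log (pZ x.2.2))]
    refine Finset.sum_congr rfl fun z _ => ?_
    show ∑ s, ∑ y, p (s, y, z) * Real.log (pZ z) = _
    simp only [← Finset.sum_mul]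
    rfl
  have hsplit : ∑ x, p x * Real.log (q x)
      = (∑ x : α × β × γ, p x * Real.log (pSZ (x.1, x.2.2)))
        + (∑ x : α × β × γ, p x * Real.log (pYZ (x.2.1, x.2.2)))
        - ∑ x : α × β × γ, p x * Real.log (pZ x.2.2) := by
    rw [Finset.sum_congr rfl fun x _ => hlogq x, Finset.sum_sub_distrib,
      Finset.sum_add_distrib]
  have hgibbs : ∑ x, (p x - q x) ≤ ∑ x, (p x * Real.log (p x) - p x * Real.log (q x)) :=
    Finset.sum_le_sum fun x _ => gibbs_pointwise (p x) (q x) (hp x) (hq_nn x) (hq_pos x)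
  have hzero : ∑ x, (p x - q x) = (0 : ℝ) := by
    rw [Finset.sum_sub_distrib, hsum, hqsum]; ring
  have hfin : (0 : ℝ) ≤ ∑ x, (p x * Real.log (p x) - p x * Real.log (q x)) :=
    hzero ▸ hgibbs
  rw [Finset.sum_sub_distrib, hsplit] at hfin
  simp only [shannonEntropy]
  linarith [hfin, hA, hB, hC]
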